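/- arXiv:2510.06157 — 3 statements merged into one kernel-verified Lean document; each statement's English description precedes it below -/
import Mathlib

section
/- Stationarity of GNAR processes (Theorem 1, stated in its equivalent VAR stability form): if the global-α GNAR coefficients satisfy Σ_{k=1}^p ( |α_k| + Σ_{r=1}^{s_k} |β_{kr}| ) < 1, then for every complex number z with |z| ≤ 1 the complex d×d matrix I_d − Σ_{k=1}^p Φ_k z^k is invertible (equivalently, det( I_d − Σ_{k=1}^p Φ_k z^k ) ≠ 0), which is the stability condition guaranteeing that the GNAR(p,[s_1,…,s_p]) process over a static network is stationary. -/
/-!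
Equip `d × d` matrices with the `ℓ∞ → ℓ∞` operator norm, i.e. the maximal absolute row sum.
A nonnegative matrix with row sums at most `1` has norm at most `1`, so by the triangle inequality
`‖Φ_k‖ ≤ |α_k| + Σ_r |β_{kr}|`, and for `|z| ≤ 1` the matrix `M = Σ_k z^k Φ_k` has `‖M‖ < 1`.
A vector `v ≠ 0` with `(1 - M) v = 0` would satisfy `‖v‖ = ‖M v‖ ≤ ‖M‖ ‖v‖ < ‖v‖`, so
`det (1 - M) ≠ 0`.
-/

attribute [local instance] Matrix.linftyOpNormedAddCommGroup Matrix.linftyOpNormedRing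
  Matrix.linftyOpNormedAlgebra

theorem norm_smul_add_sum_smul_le {E ι : Type*} [SeminormedAddCommGroup E] [NormedSpace ℝ E]
    (s : Finset ι) (a : ℝ) (b : ι → ℝ) {x : E} {y : ι → E} (hx : ‖x‖ ≤ 1)
    (hy : ∀ i ∈ s, ‖y i‖ ≤ 1) :
    ‖a • x + ∑ i ∈ s, b i • y i‖ ≤ |a| + ∑ i ∈ s, |b i| := by
  have hax : ‖a • x‖ ≤ |a| := by
    simpa [norm_smul] using mul_le_of_le_one_right (abs_nonneg a) hx
  have hby : ∀ i ∈ s, ‖b i • y i‖ ≤ |b i| := fun i hi => by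
    simpa [norm_smul] using mul_le_of_le_one_right (abs_nonneg (b i)) (hy i hi)
  exact (norm_add_le _ _).trans (add_le_add hax (norm_sum_le_of_le s hby))

theorem norm_sum_pow_smul_le_sum_norm {𝕜 E ι : Type*} [NormedField 𝕜] [SeminormedAddCommGroup E]
    [NormedSpace 𝕜 E] (s : Finset ι) (e : ι → ℕ) (x : ι → E) {z : 𝕜} (hz : ‖z‖ ≤ 1) :
    ‖∑ i ∈ s, z ^ e i • x i‖ ≤ ∑ i ∈ s, ‖x i‖ :=
  norm_sum_le_of_le s fun i _ => by
    rw [norm_smul, norm_pow]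
    exact mul_le_of_le_one_left (norm_nonneg _) (pow_le_one₀ (norm_nonneg z) hz)

namespace Matrix

variable {m n : Type*} [Fintype m] [Fintype n]

theorem linfty_opNorm_one_le [DecidableEq n] {R : Type*} [NormedRing R] [NormOneClass R] :
    ‖(1 : Matrix n n R)‖ ≤ 1 := by
  rw [← diagonal_one, linfty_opNorm_diagonal]
  exact (pi_norm_const_le (1 : R)).trans norm_one.le

theorem linfty_opNorm_le_one_of_nonneg_of_sum_row_le_one {B : Matrix m n ℝ}
    (hnn : ∀ i j, 0 ≤ B i j) (hrow : ∀ i, ∑ j, B i j ≤ 1) : ‖B‖ ≤ 1 := by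
  rw [← coe_nnnorm, ← NNReal.coe_one, NNReal.coe_le_coe, linfty_opNNNorm_def]
  refine Finset.sup_le fun i _ => ?_
  rw [← NNReal.coe_le_coe, NNReal.coe_sum]
  simpa only [coe_nnnorm, Real.norm_of_nonneg (hnn i _), NNReal.coe_one] using hrow i

theorem linfty_opNorm_map_ofReal (A : Matrix m n ℝ) :
    ‖A.map ((↑) : ℝ → ℂ)‖ = ‖A‖ := by
  simp [linfty_opNorm_def]

theorem det_one_sub_ne_zero_of_linfty_opNorm_lt_one [DecidableEq n] {K : Type*} [NormedField K]
    {M : Matrix n n K} (hM : ‖M‖ < 1) : (1 - M).det ≠ 0 := by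
  intro hdet
  obtain ⟨v, hv, hker⟩ := exists_mulVec_eq_zero_iff.mpr hdet
  have hfix : M *ᵥ v = v := by
    rw [sub_mulVec, one_mulVec, sub_eq_zero] at hker
    exact hker.symm
  have hpos : 0 < ‖v‖ := norm_pos_iff.mpr hv
  have : ‖v‖ < ‖v‖ := calc
    ‖v‖ = ‖M *ᵥ v‖ := by rw [hfix]
    _ ≤ ‖M‖ * ‖v‖ := linfty_opNorm_mulVec M v
    _ < 1 * ‖v‖ := by gcongr
    _ = ‖v‖ := one_mul _
  exact this.false

end Matrix

theorem gnar_stationarity_general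
    (d p : ℕ)
    (s : Fin p → ℕ)
    (α : Fin p → ℝ) (β : (k : Fin p) → Fin (s k) → ℝ)
    (B : ℕ → Matrix (Fin d) (Fin d) ℝ)
    (hBnn : ∀ r i j, 0 ≤ B r i j)
    (hBrow : ∀ r i, ∑ j, B r i j ≤ 1)
    (Φ : Fin p → Matrix (Fin d) (Fin d) ℝ)
    (hΦ : ∀ k, Φ k =
      α k • (1 : Matrix (Fin d) (Fin d) ℝ) + ∑ r : Fin (s k), β k r • B (r.1 + 1))
    (hcoef : ∑ k, (|α k| + ∑ r : Fin (s k), |β k r|) < 1) :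
    ∀ z : ℂ, ‖z‖ ≤ 1 →
      ((1 : Matrix (Fin d) (Fin d) ℂ)
        - ∑ k : Fin p, z ^ (k.1 + 1) • (Φ k).map (Complex.ofReal)).det ≠ 0 := by
  intro z hz
  have hΦ_norm : ∀ k, ‖Φ k‖ ≤ |α k| + ∑ r : Fin (s k), |β k r| := fun k => by
    rw [hΦ k]
    exact norm_smul_add_sum_smul_le _ _ _ Matrix.linfty_opNorm_one_le fun r _ =>
      Matrix.linfty_opNorm_le_one_of_nonneg_of_sum_row_le_one (hBnn _) (hBrow _)
  refine Matrix.det_one_sub_ne_zero_of_linfty_opNorm_lt_one ?_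
  calc ‖∑ k : Fin p, z ^ (k.1 + 1) • (Φ k).map Complex.ofReal‖
      ≤ ∑ k, ‖(Φ k).map Complex.ofReal‖ := norm_sum_pow_smul_le_sum_norm _ _ _ hz
    _ = ∑ k, ‖Φ k‖ := by simp only [Matrix.linfty_opNorm_map_ofReal]
    _ ≤ ∑ k, (|α k| + ∑ r : Fin (s k), |β k r|) := Finset.sum_le_sum fun k _ => hΦ_norm k
    _ < 1 := hcoef

/-- **Stationarity of GNAR processes** (Theorem 1, VAR stability form):
if the global-α GNAR coefficients satisfy
`Σ_{k=1}^p (|α_k| + Σ_{r=1}^{s_k} |β_{kr}|) < 1`, then for every complex `z`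
with `|z| ≤ 1` the matrix `I_d − Σ_{k=1}^p Φ_k z^k` has nonzero determinant. -/
theorem gnar_stationarity
    (d p : ℕ) (hd : 1 ≤ d) (hp : 1 ≤ p)
    (s : Fin p → ℕ) (hs : ∀ k, 1 ≤ s k)
    (α : Fin p → ℝ) (β : (k : Fin p) → Fin (s k) → ℝ)
    (B : ℕ → Matrix (Fin d) (Fin d) ℝ)
    (hBnn : ∀ r i j, 0 ≤ B r i j)
    (hBrow : ∀ r i, ∑ j, B r i j ≤ 1)
    (Φ : Fin p → Matrix (Fin d) (Fin d) ℝ)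
    (hΦ : ∀ k, Φ k =
      α k • (1 : Matrix (Fin d) (Fin d) ℝ) + ∑ r : Fin (s k), β k r • B (r.1 + 1))
    (hcoef : ∑ k, (|α k| + ∑ r : Fin (s k), |β k r|) < 1) :
    ∀ z : ℂ, ‖z‖ ≤ 1 →
      ((1 : Matrix (Fin d) (Fin d) ℂ)
        - ∑ k : Fin p, z ^ (k.1 + 1) • (Φ k).map (Complex.ofReal)).det ≠ 0 :=
  gnar_stationarity_general d p s α β B hBnn hBrow Φ hΦ hcoef
end

section
/- Theorem 2(a) for the GNAR spectral density (sparsity of the inverse spectrum beyond distance 2r*): suppose every B_r has (i,j)-entry equal to zero unless δ(i,j) = r, let r* = max{s_1,…,s_p}, let σ > 0, fix ω ∈ (0, 0.5], and assume U_p(ω) = I_d − Σ_{k=1}^p Φ_k e^{−i2πkω} is invertible. Define the GNAR spectral density f(ω) = σ² U_p(ω)^{−1} (U_p(ω)^H)^{−1} and the inverse spectral matrix S(ω) = f(ω)^{−1}. Then [S(ω)]_{ij} = 0 for every pair of nodes (i,j) with δ(i,j) ≥ 2r* + 1; that is, time series at nodes whose network distance is at least 2r*+1 carry no edge in the GNAR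 partial correlation graph. -/
open Matrix
open scoped BigOperators

/-- **Theorem 2(a) for the GNAR spectral density** (sparsity of the inverse
spectrum beyond distance `2r*`): if every `B_r` has `(i,j)`-entry zero unless
`δ(i,j) = r`, `r* = max{s_1,…,s_p}`, `σ > 0`, `ω ∈ (0, 0.5]`, and
`U_p(ω) = I_d − Σ_{k=1}^p Φ_k e^{−i2πkω}` is invertible, then the inverse
`S(ω)` of the GNAR spectral density `f(ω) = σ² U_p(ω)⁻¹ (U_p(ω)ᴴ)⁻¹` has
`[S(ω)]_{ij} = 0` whenever `δ(i,j) ≥ 2r* + 1`. -/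
theorem gnar_inverse_spectrum_sparsity
    (d p : ℕ) (hd : 1 ≤ d) (hp : 1 ≤ p)
    (s : Fin p → ℕ) (hs : ∀ k, 1 ≤ s k)
    (α : Fin p → ℝ) (β : (k : Fin p) → Fin (s k) → ℝ)
    (B : ℕ → Matrix (Fin d) (Fin d) ℝ)
    (hBnn : ∀ r i j, 0 ≤ B r i j)
    (hBrow : ∀ r i, ∑ j, B r i j ≤ 1)
    (G : SimpleGraph (Fin d)) (hG : G.Connected)
    (hBsupp : ∀ r : ℕ, ∀ i j : Fin d, G.dist i j ≠ r → B r i j = 0)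
    (Φ : Fin p → Matrix (Fin d) (Fin d) ℝ)
    (hΦ : ∀ k, Φ k =
      α k • (1 : Matrix (Fin d) (Fin d) ℝ) + ∑ r : Fin (s k), β k r • B (r.1 + 1))
    (rstar : ℕ) (hrstar : rstar = Finset.univ.sup s)
    (σ : ℝ) (hσ : 0 < σ)
    (ω : ℝ) (hω1 : 0 < ω) (hω2 : ω ≤ 0.5)
    (Upω : Matrix (Fin d) (Fin d) ℂ)
    (hUp : Upω = (1 : Matrix (Fin d) (Fin d) ℂ)
      - ∑ k : Fin p,
          Complex.exp (-(Complex.I) * (2 * Real.pi * (k.1 + 1) * ω)) • (Φ k).map (Complex.ofReal))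
    (hinv : IsUnit Upω)
    (S : Matrix (Fin d) (Fin d) ℂ)
    (hS : S = (((σ : ℂ) ^ 2) • (Upω⁻¹ * (Upωᴴ)⁻¹))⁻¹) :
    ∀ i j : Fin d, 2 * rstar + 1 ≤ G.dist i j → S i j = 0 := by
  intro i j hij
  have hrs : ∀ k : Fin p, s k ≤ rstar := by
    intro k; rw [hrstar]; exact Finset.le_sup (Finset.mem_univ k)
  -- entries of Upω vanish beyond distance rstar
  have hUzero : ∀ a b : Fin d, rstar < G.dist a b → Upω a b = 0 := by
    intro a b hab
    have hne : a ≠ b := by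
      intro h; subst h; simp [SimpleGraph.dist_self] at hab
    have hΦ0 : ∀ k : Fin p, Φ k a b = 0 := by
      intro k
      rw [hΦ]
      rw [Matrix.add_apply, Matrix.smul_apply, Matrix.one_apply_ne hne, smul_zero,
        zero_add, Matrix.sum_apply]
      refine Finset.sum_eq_zero fun r _ => ?_
      rw [Matrix.smul_apply, hBsupp (r.1 + 1) a b, smul_zero]
      have h1 : r.1 + 1 ≤ s k := r.2
      have h2 := hrs k
      omega
    rw [hUp]
    rw [Matrix.sub_apply, Matrix.one_apply_ne hne, Matrix.sum_apply]
    have : ∀ k ∈ (Finset.univ : Finset (Fin p)),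
        (Complex.exp (-(Complex.I) * (2 * Real.pi * (k.1 + 1) * ω)) •
          (Φ k).map (Complex.ofReal)) a b = 0 := by
      intro k _
      rw [Matrix.smul_apply, Matrix.map_apply, hΦ0 k]
      simp
    rw [Finset.sum_eq_zero this, sub_zero]
  -- invertibility facts
  have hdet : IsUnit Upω.det := (Matrix.isUnit_iff_isUnit_det _).mp hinv
  have hdetH : IsUnit (Upωᴴ).det := by
    rw [Matrix.det_conjTranspose]; exact hdet.star
  have h1 : Upω⁻¹ * Upω = 1 := Matrix.nonsing_inv_mul _ hdet
  have h2 : Upωᴴ⁻¹ * Upωᴴ = 1 := Matrix.nonsing_inv_mul _ hdetH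
  have hσ2 : ((σ : ℂ) ^ 2) ≠ 0 :=
    pow_ne_zero 2 (Complex.ofReal_ne_zero.mpr (ne_of_gt hσ))
  have key : (((σ : ℂ) ^ 2) • (Upω⁻¹ * (Upωᴴ)⁻¹)) *
      ((((σ : ℂ) ^ 2)⁻¹) • (Upωᴴ * Upω)) = 1 := by
    rw [Matrix.smul_mul, Matrix.mul_smul, smul_smul, mul_inv_cancel₀ hσ2, one_smul,
      Matrix.mul_assoc, ← Matrix.mul_assoc (Upωᴴ)⁻¹, h2, Matrix.one_mul, h1]
  have hSform : S = (((σ : ℂ) ^ 2)⁻¹) • (Upωᴴ * Upω) := by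
    rw [hS]; exact Matrix.inv_eq_right_inv key
  rw [hSform, Matrix.smul_apply, Matrix.mul_apply]
  have hterm : ∀ l : Fin d, Upωᴴ i l * Upω l j = 0 := by
    intro l
    have htri : G.dist i j ≤ G.dist i l + G.dist l j :=
      hG.dist_triangle
    by_cases h : rstar < G.dist l i
    · rw [Matrix.conjTranspose_apply, hUzero l i h, star_zero, zero_mul]
    · have : rstar < G.dist l j := by
        rw [SimpleGraph.dist_comm] at h; omega
      rw [hUzero l j this, mul_zero]
  rw [Finset.sum_eq_zero fun l _ => hterm l, smul_zero]
end

section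
/- Existence and uniqueness for covariance selection (Proposition B.2, item 1, after Dempster): given a symmetric positive definite matrix Σ̃ ∈ ℝ^{n×n} and a symmetric edge set E, there exists a unique symmetric positive definite matrix Σ̂ ∈ ℝ^{n×n} such that (i) Σ̂_{γγ} = Σ̃_{γγ} for every γ, (ii) Σ̂_{γμ} = Σ̃_{γμ} for every (γ,μ) ∈ E, and (iii) (Σ̂^{−1})_{γμ} = 0 for every pair γ ≠ μ with (γ,μ) ∉ E. -/
/-! The completion `Σ̂` maximises `det` over the set of positive semidefinite matrices that agree
with `Σ̃` on the diagonal and on `E`; this set is compact because `2 |A i j| ≤ A i i + A j j`.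
The maximiser is positive definite since `det Σ̂ ≥ det Σ̃ > 0`, so for a non-edge `(γ, μ)` the
line `Σ̂ + t (e_γμ + e_μγ)` stays in the set for small `t`, and the derivative
`det Σ̂ · tr (Σ̂⁻¹ (e_γμ + e_μγ)) = 2 det Σ̂ · (Σ̂⁻¹)_γμ` of `det` along it vanishes.

For uniqueness, if `A` and `B` are two such matrices then `D = B - A` vanishes on the diagonal
and on `E` while `A⁻¹` and `B⁻¹` vanish off them, so
`tr (A⁻¹ D B⁻¹ D) = tr ((A⁻¹ - B⁻¹) D) = tr (A⁻¹ D) - tr (B⁻¹ D) = 0`.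
Writing `A⁻¹ = Pᴴ P` and `B⁻¹ = Qᴴ Q`, this trace is the squared Frobenius norm of `Q D Pᴴ`,
hence `D = 0`. -/

open Matrix

open Filter Topology
open scoped ComplexOrder

namespace Matrix

theorem PosSemidef.apply_mul_apply_le {ι : Type*} {A : Matrix ι ι ℝ} (hA : A.PosSemidef)
    (i j : ι) : A i j * A i j ≤ A i i * A j j := by
  have h := (hA.submatrix ![i, j]).det_nonneg
  have hji : A j i = A i j := by simpa using congrFun (congrFun hA.isHermitian.eq i) j
  rw [det_fin_two] at h
  simp only [submatrix_apply, Matrix.cons_val_zero, Matrix.cons_val_one, hji] at h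
  linarith

theorem PosSemidef.two_mul_abs_apply_le {ι : Type*} {A : Matrix ι ι ℝ} (hA : A.PosSemidef)
    (i j : ι) : 2 * |A i j| ≤ A i i + A j j := by
  have hii : 0 ≤ A i i := hA.diag_nonneg
  have hjj : 0 ≤ A j j := hA.diag_nonneg
  have h := hA.apply_mul_apply_le i j
  rw [← abs_mul_abs_self (A i j)] at h
  nlinarith [sq_nonneg (A i i - A j j), abs_nonneg (A i j)]

theorem isClosed_setOf_posSemidef {ι 𝕜 : Type*} [Fintype ι] [RCLike 𝕜] :
    IsClosed {A : Matrix ι ι 𝕜 | A.PosSemidef} := by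
  simp only [posSemidef_iff_dotProduct_mulVec, Set.ofPred_and, Set.ofPred_forall]
  exact (isClosed_eq (by fun_prop) continuous_id).inter
    (isClosed_iInter fun x => isClosed_le continuous_const (by fun_prop))

section Perturbation

variable {ι : Type*} [Fintype ι]

lemma dotProduct_mulVec_smul_self (A : Matrix ι ι ℝ) (r : ℝ) (x : ι → ℝ) :
    r • x ⬝ᵥ A *ᵥ (r • x) = r ^ 2 * (x ⬝ᵥ A *ᵥ x) := by
  simp only [mulVec_smul, dotProduct_smul, smul_dotProduct, smul_eq_mul]
  ring

theorem PosDef.eventually_posDef_add_smul {A D : Matrix ι ι ℝ} (hA : A.PosDef)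
    (hD : D.IsHermitian) : ∀ᶠ t : ℝ in 𝓝 0, (A + t • D).PosDef := by
  -- By homogeneity it suffices to test unit vectors, and the unit sphere is compact.
  have hsphere : ∀ᶠ t : ℝ in 𝓝 0, ∀ u ∈ Metric.sphere (0 : ι → ℝ) 1,
      0 < u ⬝ᵥ (A + t • D) *ᵥ u := by
    refine (isCompact_sphere 0 1).eventually_forall_of_forall_eventually fun u hu => ?_
    have hu0 : u ≠ 0 := ne_zero_of_mem_unit_sphere ⟨u, hu⟩
    have hcont : Continuous fun z : ℝ × (ι → ℝ) => z.2 ⬝ᵥ (A + z.1 • D) *ᵥ z.2 := by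
      fun_prop
    refine hcont.continuousAt.eventually (lt_mem_nhds ?_)
    simpa using hA.dotProduct_mulVec_pos hu0
  filter_upwards [hsphere] with t ht
  refine .of_dotProduct_mulVec_pos (hA.isHermitian.add (hD.smul (.all t))) fun x hx => ?_
  have hnorm : ‖x‖ ≠ 0 := norm_ne_zero_iff.mpr hx
  have hu : ‖x‖⁻¹ • x ∈ Metric.sphere (0 : ι → ℝ) 1 := by
    simp [norm_smul, hnorm]
  have hx_eq : x = ‖x‖ • ‖x‖⁻¹ • x := by rw [smul_smul, mul_inv_cancel₀ hnorm, one_smul]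
  rw [star_trivial, hx_eq, dotProduct_mulVec_smul_self]
  exact mul_pos (by positivity) (ht _ hu)

end Perturbation

section DerivDet

open Polynomial

variable {ι 𝕜 : Type*} [Fintype ι] [DecidableEq ι] [NontriviallyNormedField 𝕜]

theorem hasDerivAt_det_one_add_smul (M : Matrix ι ι 𝕜) :
    HasDerivAt (fun t : 𝕜 => (1 + t • M).det) M.trace 0 := by
  have hp := (det (1 + (X : 𝕜[X]) • M.map C)).hasDerivAt 0
  rw [derivative_det_one_add_X_smul] at hp
  convert hp using 2 with t
  simp [eval_det, ← smul_eq_mul_diagonal]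

theorem hasDerivAt_det_add_smul {A : Matrix ι ι 𝕜} (hA : IsUnit A.det) (D : Matrix ι ι 𝕜) :
    HasDerivAt (fun t : 𝕜 => (A + t • D).det) (A.det * (A⁻¹ * D).trace) 0 := by
  have hfac : ∀ t : 𝕜, A + t • D = A * (1 + t • (A⁻¹ * D)) := fun t => by
    rw [Matrix.mul_add, Matrix.mul_one, Matrix.mul_smul, mul_nonsing_inv_cancel_left _ _ hA]
  simp only [hfac, det_mul]
  exact (hasDerivAt_det_one_add_smul _).const_mul _

theorem trace_inv_mul_eq_zero_of_isLocalMax {A D : Matrix ι ι ℝ} (hA : IsUnit A.det)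
    (hmax : IsLocalMax (fun t : ℝ => (A + t • D).det) 0) : (A⁻¹ * D).trace = 0 :=
  (mul_eq_zero.mp (hmax.hasDerivAt_eq_zero (hasDerivAt_det_add_smul hA D))).resolve_left
    hA.ne_zero

end DerivDet

theorem trace_mul_eq_zero_of_forall {ι R : Type*} [Fintype ι] [NonUnitalNonAssocSemiring R]
    {M N : Matrix ι ι R} (h : ∀ i j, M i j = 0 ∨ N j i = 0) : (M * N).trace = 0 :=
  Finset.sum_eq_zero fun i _ => Finset.sum_eq_zero fun j _ => by
    rcases h i j with h | h <;> simp [h]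

section RCLike

variable {ι 𝕜 : Type*} [Fintype ι] [DecidableEq ι] [RCLike 𝕜]

open scoped MatrixOrder in
theorem PosDef.exists_eq_conjTranspose_mul_self {P : Matrix ι ι 𝕜} (hP : P.PosDef) :
    ∃ B : Matrix ι ι 𝕜, IsUnit B ∧ P = Bᴴ * B := by
  obtain ⟨B, rfl⟩ := CStarAlgebra.nonneg_iff_eq_star_mul_self.mp hP.posSemidef.nonneg
  refine ⟨B, ?_, rfl⟩
  have := hP.isUnit
  rw [isUnit_iff_isUnit_det, det_mul] at this
  exact (isUnit_iff_isUnit_det B).mpr (isUnit_of_mul_isUnit_right this)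

theorem eq_zero_of_trace_mul_mul_mul_eq_zero {P Q D : Matrix ι ι 𝕜} (hP : P.PosDef)
    (hQ : Q.PosDef) (hD : D.IsHermitian) (h : (P * D * Q * D).trace = 0) : D = 0 := by
  obtain ⟨B, hB, rfl⟩ := hP.exists_eq_conjTranspose_mul_self
  obtain ⟨C, hC, rfl⟩ := hQ.exists_eq_conjTranspose_mul_self
  have hsq : (Bᴴ * B * D * (Cᴴ * C) * D).trace = ((C * D * Bᴴ)ᴴ * (C * D * Bᴴ)).trace := by
    rw [conjTranspose_mul, conjTranspose_mul, hD.eq, conjTranspose_conjTranspose,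
      show Bᴴ * B * D * (Cᴴ * C) * D = Bᴴ * (B * D * Cᴴ * C * D) by simp only [Matrix.mul_assoc],
      trace_mul_comm]
    simp only [Matrix.mul_assoc]
  rw [hsq, trace_conjTranspose_mul_self_eq_zero_iff, Matrix.mul_assoc] at h
  have hDB : D * Bᴴ = 0 := hC.mul_left_cancel (h.trans (Matrix.mul_zero C).symm)
  exact hB.star.mul_right_cancel (hDB.trans (Matrix.zero_mul _).symm)

end RCLike

end Matrix

namespace CovarianceSelection

variable {ι : Type*}

def psdCompletions (S : Matrix ι ι ℝ) (E : Set (ι × ι)) : Set (Matrix ι ι ℝ) :=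
  {A | A.PosSemidef ∧ ∀ i j, (i = j ∨ (i, j) ∈ E) → A i j = S i j}

theorem mem_psdCompletions_self {S : Matrix ι ι ℝ} (hS : S.PosSemidef) (E : Set (ι × ι)) :
    S ∈ psdCompletions S E :=
  ⟨hS, fun _ _ _ => rfl⟩

variable [Fintype ι]

theorem isCompact_psdCompletions (S : Matrix ι ι ℝ) (E : Set (ι × ι)) :
    IsCompact (psdCompletions S E) := by
  have hclosed : IsClosed (psdCompletions S E) := by
    simp only [psdCompletions, Set.ofPred_and, Set.ofPred_forall]
    exact isClosed_setOf_posSemidef.inter <| isClosed_iInter fun i => isClosed_iInter fun j =>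
      isClosed_iInter fun _ => isClosed_eq (by fun_prop) continuous_const
  refine (isCompact_univ_pi fun i => isCompact_univ_pi fun j =>
    isCompact_Icc (a := -((S i i + S j j) / 2)) (b := (S i i + S j j) / 2)).of_isClosed_subset
    hclosed ?_
  rintro A ⟨hA, hAS⟩ i - j -
  have h := hA.two_mul_abs_apply_le i j
  rw [hAS i i (.inl rfl), hAS j j (.inl rfl)] at h
  exact abs_le.mp (by linarith)

variable [DecidableEq ι]

theorem inv_apply_eq_zero_of_isMaxOn_det {S Sh : Matrix ι ι ℝ} {E : Set (ι × ι)}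
    (hE : ∀ i j, (i, j) ∈ E → (j, i) ∈ E) (hSh : Sh ∈ psdCompletions S E) (hShpd : Sh.PosDef)
    (hmax : IsMaxOn det (psdCompletions S E) Sh) {i j : ι} (hij : i ≠ j) (hijE : (i, j) ∉ E) :
    Sh⁻¹ i j = 0 := by
  set Δ : Matrix ι ι ℝ := single i j 1 + single j i 1
  have hΔ : Δ.IsHermitian := by
    simp [Δ, IsHermitian, add_comm]
  have hΔ_zero : ∀ k l, (k = l ∨ (k, l) ∈ E) → Δ k l = 0 := by
    intro k l hkl
    have hij' : ¬(i = k ∧ j = l) := by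
      rintro ⟨rfl, rfl⟩
      exact hkl.elim hij hijE
    have hji' : ¬(j = k ∧ i = l) := by
      rintro ⟨rfl, rfl⟩
      exact hkl.elim hij.symm fun h => hijE (hE _ _ h)
    simp [Δ, hij', hji']
  have hloc : IsLocalMax (fun t : ℝ => (Sh + t • Δ).det) 0 := by
    filter_upwards [hShpd.eventually_posDef_add_smul hΔ] with t ht
    simpa using hmax ⟨ht.posSemidef, fun k l hkl => by simp [hΔ_zero k l hkl, hSh.2 k l hkl]⟩
  have htr := trace_inv_mul_eq_zero_of_isLocalMax ((isUnit_iff_isUnit_det _).mp hShpd.isUnit) hloc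
  have hsymm : Sh⁻¹ j i = Sh⁻¹ i j := by
    simpa using congrFun (congrFun hShpd.inv.isHermitian.eq i) j
  have htrΔ : (Sh⁻¹ * Δ).trace = Sh⁻¹ j i + Sh⁻¹ i j := by
    simp [Δ, Matrix.mul_add, trace_mul_single]
  rwa [htrΔ, hsymm, add_self_eq_zero] at htr

theorem eq_of_inv_apply_eq_zero {A B : Matrix ι ι ℝ} {E : Set (ι × ι)} (hA : A.PosDef)
    (hB : B.PosDef) (hAB : ∀ i j, (i = j ∨ (i, j) ∈ E) → A i j = B i j)
    (hA' : ∀ i j, i ≠ j → (i, j) ∉ E → A⁻¹ i j = 0)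
    (hB' : ∀ i j, i ≠ j → (i, j) ∉ E → B⁻¹ i j = 0) : A = B := by
  have hD : (B - A).IsHermitian := hB.isHermitian.sub hA.isHermitian
  have htrace : ∀ M : Matrix ι ι ℝ, (∀ i j, i ≠ j → (i, j) ∉ E → M i j = 0) →
      (M * (B - A)).trace = 0 := fun M hM => trace_mul_eq_zero_of_forall fun i j => by
    by_cases hij : i = j ∨ (i, j) ∈ E
    · exact .inr (by simpa [hAB i j hij, sub_eq_zero] using hD.apply i j)
    · exact .inl (hM i j (fun h => hij (.inl h)) fun h => hij (.inr h))
  have h : (A⁻¹ * (B - A) * B⁻¹ * (B - A)).trace = 0 := by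
    rw [← Matrix.inv_sub_inv (iff_of_true hA.isUnit hB.isUnit), Matrix.sub_mul, trace_sub,
      htrace _ hA', htrace _ hB', sub_zero]
  exact (sub_eq_zero.mp (eq_zero_of_trace_mul_mul_mul_eq_zero hA.inv hB.inv hD h)).symm

end CovarianceSelection

open CovarianceSelection

theorem covariance_selection_exists_unique_general
    (n : ℕ)
    (St : Matrix (Fin n) (Fin n) ℝ) (hSt : St.PosDef)
    (E : Set (Fin n × Fin n))
    (hEsymm : ∀ γ μ : Fin n, (γ, μ) ∈ E → (μ, γ) ∈ E) :
    ∃! Sh : Matrix (Fin n) (Fin n) ℝ,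
      Sh.PosDef ∧
      (∀ γ : Fin n, Sh γ γ = St γ γ) ∧
      (∀ γ μ : Fin n, (γ, μ) ∈ E → Sh γ μ = St γ μ) ∧
      (∀ γ μ : Fin n, γ ≠ μ → (γ, μ) ∉ E → Sh⁻¹ γ μ = 0) := by
  have hStK := mem_psdCompletions_self hSt.posSemidef E
  obtain ⟨Sh, hShK, hmax⟩ :=
    (isCompact_psdCompletions St E).exists_isMaxOn ⟨St, hStK⟩ continuous_id.matrix_det.continuousOn
  have hdet : St.det ≤ Sh.det := hmax hStK
  have hShpd : Sh.PosDef := hShK.1.posDef_iff_det_ne_zero.mpr (hSt.det_pos.trans_le hdet).ne'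
  have hShinv : ∀ γ μ, γ ≠ μ → (γ, μ) ∉ E → Sh⁻¹ γ μ = 0 := fun _ _ =>
    inv_apply_eq_zero_of_isMaxOn_det hEsymm hShK hShpd hmax
  refine ⟨Sh, ⟨hShpd, fun γ => hShK.2 γ γ (.inl rfl), fun γ μ h => hShK.2 γ μ (.inr h), hShinv⟩, ?_⟩
  rintro Sh' ⟨hpd, hdiag, hE, hinv⟩
  refine eq_of_inv_apply_eq_zero hpd hShpd ?_ hinv hShinv
  rintro γ μ (rfl | h)
  · rw [hdiag, hShK.2 γ γ (.inl rfl)]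
  · rw [hE γ μ h, hShK.2 γ μ (.inr h)]

/-- **Existence and uniqueness for covariance selection** (Proposition B.2,
item 1, after Dempster): given a symmetric positive definite `Σ̃ ∈ ℝ^{n×n}` and
a symmetric edge set `E` (of pairs of distinct indices), there is a unique
symmetric positive definite `Σ̂` that matches `Σ̃` on the diagonal and on `E`,
and whose inverse vanishes on all non-edges off the diagonal. -/
theorem covariance_selection_exists_unique
    (n : ℕ) (hn : 1 ≤ n)
    (St : Matrix (Fin n) (Fin n) ℝ) (hSt : St.PosDef)
    (E : Set (Fin n × Fin n))
    (hEsymm : ∀ γ μ : Fin n, (γ, μ) ∈ E → (μ, γ) ∈ E)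
    (hEne : ∀ γ μ : Fin n, (γ, μ) ∈ E → γ ≠ μ) :
    ∃! Sh : Matrix (Fin n) (Fin n) ℝ,
      Sh.PosDef ∧
      (∀ γ : Fin n, Sh γ γ = St γ γ) ∧
      (∀ γ μ : Fin n, (γ, μ) ∈ E → Sh γ μ = St γ μ) ∧
      (∀ γ μ : Fin n, γ ≠ μ → (γ, μ) ∉ E → Sh⁻¹ γ μ = 0) :=
  covariance_selection_exists_unique_general n St hSt E hEsymm
end
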